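/- arXiv:1001.4987 — 2 statements merged into one kernel-verified Lean document; each statement's English description precedes it below -/
import Mathlib

section
/- Let r ≥ 2 and let R ⊆ {0,1}^r be a Boolean relation that contains both the all-zeros tuple 0^r and the all-ones tuple 1^r (i.e., R is 0-valid and 1-valid) but is not the complete relation {0,1}^r. Then R 3-simulates equality. -/
/-- A Boolean relation of arity `r`: a set of bit-tuples of length `r`. -/
abbrev BoolRel (r : ℕ) := Set (Fin r → Bool)

/-- The unary constant relation `{0}`. -/
def Rzero : BoolRel 1 := {a | a 0 = false}

/-- The unary constant relation `{1}`. -/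
def Rone : BoolRel 1 := {a | a 0 = true}

/-- A constraint over a variable set `V`: a Boolean relation together with a scope. -/
structure Constraint (V : Type) where
  arity : ℕ
  rel : BoolRel arity
  scope : Fin arity → V

/-- An assignment satisfies a constraint if the scoped tuple lies in the relation. -/
def Constraint.sat {V : Type} (c : Constraint V) (σ : V → Bool) : Prop :=
  (fun i => σ (c.scope i)) ∈ c.rel

/-- A CSP instance: a collection of constraints over a variable set `V`. -/
structure CSPInstance (V : Type) where
  constraints : List (Constraint V)

/-- An assignment satisfies an instance if it satisfies every constraint. -/
def CSPInstance.sat {V : Type} (I : CSPInstance V) (σ : V → Bool) : Prop :=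
  ∀ c ∈ I.constraints, c.sat σ

/-- An instance is over the constraint language `Γ` if every constraint uses a relation of `Γ`. -/
def CSPInstance.over {V : Type} (I : CSPInstance V) (Γ : Set (Σ r, BoolRel r)) : Prop :=
  ∀ c ∈ I.constraints, (⟨c.arity, c.rel⟩ : Σ r, BoolRel r) ∈ Γ

/-- The degree of a variable: the number of occurrences among the scopes of the constraints. -/
def varDegree {V : Type} [DecidableEq V] (I : CSPInstance V) (v : V) : ℕ :=
  (I.constraints.map fun c => (Finset.univ.filter fun i => c.scope i = v).card).sum

/-- The language `{R_zero, R_one}` of pins. -/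
def pinLang : Set (Σ r, BoolRel r) := {⟨1, Rzero⟩, ⟨1, Rone⟩}

/-- `Γ` `d`-simulates the `k`-ary equality relation. -/
def simulatesEqK (Γ : Set (Σ r, BoolRel r)) (d k : ℕ) : Prop :=
  ∃ (ℓ : ℕ), k ≤ ℓ ∧ ∃ I : CSPInstance (Fin ℓ),
    I.over (Γ ∪ pinLang) ∧
    (∀ v : Fin ℓ, varDegree I v ≤ d) ∧
    (∀ v : Fin ℓ, (v : ℕ) < k → varDegree I v ≤ d - 1) ∧
    ∃ m : ℕ, 1 ≤ m ∧
      Nat.card {σ : Fin ℓ → Bool | I.sat σ ∧ ∀ v : Fin ℓ, (v : ℕ) < k → σ v = false} = m ∧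
      Nat.card {σ : Fin ℓ → Bool | I.sat σ ∧ ∀ v : Fin ℓ, (v : ℕ) < k → σ v = true} = m ∧
      (∀ σ : Fin ℓ → Bool, I.sat σ →
        (∀ v : Fin ℓ, (v : ℕ) < k → σ v = false) ∨ (∀ v : Fin ℓ, (v : ℕ) < k → σ v = true))

/-- `Γ` `d`-simulates equality: it `d`-simulates `Eq_k` for every `k ≥ 2`. -/
def simulatesEq (Γ : Set (Σ r, BoolRel r)) (d : ℕ) : Prop :=
  ∀ k : ℕ, 2 ≤ k → simulatesEqK Γ d k

/-- A single relation `d`-simulates equality if the language `{R}` does. -/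
def relSimulatesEq {r : ℕ} (R : BoolRel r) (d : ℕ) : Prop :=
  simulatesEq {⟨r, R⟩} d

/-- OR-conj relations: definable by a conjunction of pins and ORs (of any arity ≥ 1). -/
def ORConj {r : ℕ} (R : BoolRel r) : Prop :=
  ∃ (P : Set (Fin r × Bool)) (Cl : Set (Set (Fin r))),
    (∀ C ∈ Cl, C.Nonempty) ∧
    ∀ a : Fin r → Bool, a ∈ R ↔
      ((∀ p ∈ P, a p.1 = p.2) ∧ (∀ C ∈ Cl, ∃ i ∈ C, a i = true))

/-- NAND-conj relations: definable by a conjunction of pins and NANDs (of any arity ≥ 1). -/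
def NANDConj {r : ℕ} (R : BoolRel r) : Prop :=
  ∃ (P : Set (Fin r × Bool)) (Cl : Set (Set (Fin r))),
    (∀ C ∈ Cl, C.Nonempty) ∧
    ∀ a : Fin r → Bool, a ∈ R ↔
      ((∀ p ∈ P, a p.1 = p.2) ∧ (∀ C ∈ Cl, ∃ i ∈ C, a i = false))

/-- One step of ppp-definability: permutation of columns, pinning, or projection. -/
inductive pppStep : (Σ r, BoolRel r) → (Σ r, BoolRel r) → Prop
  | perm {r : ℕ} (R : BoolRel r) (π : Equiv.Perm (Fin r)) :
      pppStep ⟨r, R⟩ ⟨r, {a | (fun i => a (π i)) ∈ R}⟩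
  | pin {r : ℕ} (R : BoolRel r) (i : Fin r) (c : Bool) :
      pppStep ⟨r, R⟩ ⟨r, {a | a ∈ R ∧ a i = c}⟩
  | proj {r : ℕ} (R : BoolRel (r + 1)) (i : Fin (r + 1)) :
      pppStep ⟨r + 1, R⟩ ⟨r, {a | ∃ b ∈ R, a = fun j => b (i.succAbove j)}⟩

/-- `R ≤ppp R'`: `R` is obtained from `R'` by a sequence of ppp operations. -/
def pppLE {r r' : ℕ} (R : BoolRel r) (R' : BoolRel r') : Prop :=
  Relation.ReflTransGen pppStep ⟨r', R'⟩ ⟨r, R⟩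

def Req : BoolRel 2 := {a | a 0 = a 1}
def Rneq : BoolRel 2 := {a | a 0 ≠ a 1}
def Rimp : BoolRel 2 := {a | a 0 = true → a 1 = true}
def ROR : BoolRel 2 := {a | a 0 = true ∨ a 1 = true}
def RNAND : BoolRel 2 := {a | a 0 = false ∨ a 1 = false}
def ORk (k : ℕ) : BoolRel k := {a | ∃ i, a i = true}
def NANDk (k : ℕ) : BoolRel k := {a | ∃ i, a i = false}

/-- `R₀ + R₁ = {0a : a ∈ R₀} ∪ {1a : a ∈ R₁}`. -/
def relSum {r : ℕ} (R0 R1 : BoolRel r) : BoolRel (r + 1) :=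
  {a | (a 0 = false ∧ (fun i => a i.succ) ∈ R0) ∨ (a 0 = true ∧ (fun i => a i.succ) ∈ R1)}

/-- Column `i` of `R` is constant. -/
def constCol {r : ℕ} (R : BoolRel r) (i : Fin r) : Prop :=
  ∀ a ∈ R, ∀ b ∈ R, a i = b i


/-- Affine relations: solution sets of systems of linear equations over GF(2). -/
def AffineRel {r : ℕ} (R : BoolRel r) : Prop :=
  ∃ E : Set (Finset (Fin r) × Bool),
    ∀ a : Fin r → Bool, a ∈ R ↔
      ∀ e ∈ E, (∑ i ∈ e.1, (if a i then (1 : ZMod 2) else 0)) = (if e.2 then (1 : ZMod 2) else 0)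

/-- IM-conj relations: definable by a conjunction of pins and binary implications. -/
def IMConj {r : ℕ} (R : BoolRel r) : Prop :=
  ∃ (P : Set (Fin r × Bool)) (Imp : Set (Fin r × Fin r)),
    ∀ a : Fin r → Bool, a ∈ R ↔
      ((∀ p ∈ P, a p.1 = p.2) ∧ (∀ q ∈ Imp, a q.1 = true → a q.2 = true))

/-- Pointwise order on bit-tuples. -/
def leTuple {r : ℕ} (a b : Fin r → Bool) : Prop := ∀ i, a i = true → b i = true

/-- A relation is monotone if it is upward closed. -/
def MonotoneRel {r : ℕ} (R : BoolRel r) : Prop := ∀ a ∈ R, ∀ b, leTuple a b → b ∈ R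

/-- A relation is antitone if it is downward closed. -/
def AntitoneRel {r : ℕ} (R : BoolRel r) : Prop := ∀ a ∈ R, ∀ b, leTuple b a → b ∈ R

/-- Pseudo-monotone: the restriction to non-constant columns is monotone. -/
def PseudoMonotone {r : ℕ} (R : BoolRel r) : Prop :=
  ∀ a ∈ R, ∀ b : Fin r → Bool,
    (∀ i, constCol R i → b i = a i) →
    (∀ i, ¬ constCol R i → a i = true → b i = true) → b ∈ R

/-- Pseudo-antitone: the restriction to non-constant columns is antitone. -/
def PseudoAntitone {r : ℕ} (R : BoolRel r) : Prop :=
  ∀ a ∈ R, ∀ b : Fin r → Bool,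
    (∀ i, constCol R i → b i = a i) →
    (∀ i, ¬ constCol R i → b i = true → a i = true) → b ∈ R

/-- Bit-wise complement of a relation. -/
def bwcomp {r : ℕ} (R : BoolRel r) : BoolRel r := {a | (fun i => !(a i)) ∈ R}

/-- `(P, Cl)` is a normalized OR-conj formula defining `R`: pins `P`, OR-clauses `Cl`
(distinct arguments, size ≥ 2, no pinned variable in a clause, antichain of clauses). -/
def NormalizedOR {r : ℕ} (R : BoolRel r) (P : Set (Fin r × Bool))
    (Cl : Set (Finset (Fin r))) : Prop :=
  (∀ a : Fin r → Bool, a ∈ R ↔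
      ((∀ p ∈ P, a p.1 = p.2) ∧ (∀ C ∈ Cl, ∃ i ∈ C, a i = true))) ∧
  (∀ p ∈ P, ∀ C ∈ Cl, p.1 ∉ C) ∧
  (∀ C ∈ Cl, 2 ≤ C.card) ∧
  (∀ C ∈ Cl, ∀ C' ∈ Cl, C ⊆ C' → C = C')

/-- `(P, Cl)` is a normalized NAND-conj formula defining `R`. -/
def NormalizedNAND {r : ℕ} (R : BoolRel r) (P : Set (Fin r × Bool))
    (Cl : Set (Finset (Fin r))) : Prop :=
  (∀ a : Fin r → Bool, a ∈ R ↔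
      ((∀ p ∈ P, a p.1 = p.2) ∧ (∀ C ∈ Cl, ∃ i ∈ C, a i = false))) ∧
  (∀ p ∈ P, ∀ C ∈ Cl, p.1 ∉ C) ∧
  (∀ C ∈ Cl, 2 ≤ C.card) ∧
  (∀ C ∈ Cl, ∀ C' ∈ Cl, C ⊆ C' → C = C')

/-!
Among the intervals `[u, w]` of `{0,1}^r` whose endpoints lie in `R` but which are not contained
in `R` (the whole cube is one), take a minimal one and a point `t ∈ [u, w] \ R`. By minimality,
every other point `a` of `R` in `[u, w]` satisfies `t ⊓ a = u` and `t ⊔ a = w`. Choose `i₁` with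
`u i₁ < t i₁` and `i₀` with `t i₀ < w i₀`. Pinning the coordinates where `u` and `w` agree cuts `R`
down to `R ∩ [u, w]`, which implies `x_{i₁} → x_{i₀}` and whose only points with
`x_{i₁} = x_{i₀}` are `u` and `w`. Chaining `k` copies into the cycle
`x_0 → x_1 → ⋯ → x_{k-1} → x_0` forces all `x_j` to be equal and leaves exactly two solutions;
each `x_j` occurs twice and every other variable at most twice.
-/

open Fin.NatCast in
lemma Fin.forall_of_imp_add_one {k : ℕ} [NeZero k] {P : Fin k → Prop}
    (h : ∀ j, P j → P (j + 1)) {a : Fin k} (ha : P a) (b : Fin k) : P b := by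
  have hiter (m : ℕ) : P (a + m) := by
    induction m with
    | zero => simpa using ha
    | succ m ih => simpa [add_assoc] using h _ ih
  simpa using hiter (b - a).val

lemma Bool.mem_Icc_iff_of_le {ι : Type*} {u w a : ι → Bool} (h : u ≤ w) :
    a ∈ Set.Icc u w ↔ ∀ i, u i = w i → a i = u i := by
  refine ⟨fun ha i hi => le_antisymm (hi ▸ ha.2 i) (ha.1 i), fun ha => ⟨fun i => ?_, fun i => ?_⟩⟩
  all_goals
    have hi := h i
    have hai := ha i
    revert hi hai
    cases u i <;> cases w i <;> cases a i <;> simp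

namespace CSPInstance

variable {V W : Type}

def relabel (f : V → W) (I : CSPInstance V) : CSPInstance W :=
  ⟨I.constraints.map fun c => ⟨c.arity, c.rel, f ∘ c.scope⟩⟩

lemma sat_relabel (f : V → W) (I : CSPInstance V) (σ : W → Bool) :
    (I.relabel f).sat σ ↔ I.sat (σ ∘ f) := by
  simp [relabel, sat, Constraint.sat, Function.comp_def]

lemma over_relabel (f : V → W) (I : CSPInstance V) (Γ : Set (Σ r, BoolRel r)) :
    (I.relabel f).over Γ ↔ I.over Γ := by
  simp [relabel, CSPInstance.over]

lemma varDegree_relabel [DecidableEq V] [DecidableEq W] {f : V → W} (hf : f.Injective)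
    (I : CSPInstance V) (v : V) : varDegree (I.relabel f) (f v) = varDegree I v := by
  simp [varDegree, relabel, Function.comp_def, hf.eq_iff]

end CSPInstance

namespace Constraint

variable {V : Type}

def pin (v : V) (b : Bool) : Constraint V := ⟨1, if b then Rone else Rzero, fun _ => v⟩

lemma sat_pin (v : V) (b : Bool) (σ : V → Bool) : (pin v b).sat σ ↔ σ v = b := by
  cases b <;> exact Iff.rfl

lemma pin_mem_pinLang (v : V) (b : Bool) : (⟨1, (pin v b).rel⟩ : Σ r, BoolRel r) ∈ pinLang := by
  cases b <;> simp [pin, pinLang]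

lemma card_pin_scope_eq [DecidableEq V] (v x : V) (b : Bool) :
    (Finset.univ.filter fun i => (pin v b).scope i = x).card = if v = x then 1 else 0 := by
  split_ifs with h
  · simp [pin, h]
    rfl
  · simp [pin, h]

end Constraint

lemma simulatesEqK_of_two_solutions {Γ : Set (Σ r, BoolRel r)} {d k : ℕ} [NeZero k]
    {W : Type} [Fintype W] [DecidableEq W] (I : CSPInstance (Fin k ⊕ W))
    (hover : I.over (Γ ∪ pinLang)) (hdeg : ∀ v, varDegree I v ≤ d)
    (hdeg_inl : ∀ c, varDegree I (.inl c) ≤ d - 1) (σ₀ σ₁ : Fin k ⊕ W → Bool)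
    (hσ₀ : ∀ c, σ₀ (.inl c) = false) (hσ₁ : ∀ c, σ₁ (.inl c) = true)
    (hsat : ∀ σ, I.sat σ ↔ σ = σ₀ ∨ σ = σ₁) : simulatesEqK Γ d k := by
  let e : Fin k ⊕ W ≃ Fin (k + Fintype.card W) :=
    (Equiv.sumCongr (Equiv.refl _) (Fintype.equivFin W)).trans finSumFinEquiv
  have he_inl (v : Fin (k + Fintype.card W)) (hv : (v : ℕ) < k) : e (.inl ⟨v, hv⟩) = v := rfl
  have hends (σ : Fin (k + Fintype.card W) → Bool) (b : Bool) :
      (∀ v : Fin (k + Fintype.card W), (v : ℕ) < k → σ v = b) ↔ ∀ c, (σ ∘ e) (.inl c) = b :=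
    ⟨fun h c => h _ c.isLt, fun h v hv => he_inl v hv ▸ h ⟨v, hv⟩⟩
  have hsol (b : Bool) (τ τ' : Fin k ⊕ W → Bool) (hτ : ∀ c, τ (.inl c) = b)
      (hτ' : τ' (.inl 0) = !b) (hsat' : ∀ σ, I.sat σ ↔ σ = τ ∨ σ = τ') :
      {σ | (I.relabel e).sat σ ∧ ∀ v : Fin (k + Fintype.card W), (v : ℕ) < k → σ v = b}
        = {τ ∘ e.symm} := by
    ext σ
    rw [Set.mem_ofPred_eq, Set.mem_singleton_iff, CSPInstance.sat_relabel, hsat', hends,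
      Equiv.eq_comp_symm]
    constructor
    · rintro ⟨h | h, hb⟩
      · exact h
      · have h0 := hb 0
        rw [h, hτ'] at h0
        cases b <;> simp at h0
    · rintro rfl
      exact ⟨Or.inl rfl, hτ⟩
  refine ⟨k + Fintype.card W, Nat.le_add_right _ _, I.relabel e,
    (CSPInstance.over_relabel _ _ _).mpr hover, fun v => ?_, fun v hv => ?_, 1, le_rfl, ?_, ?_,
    fun σ hs => ?_⟩
  · rw [← e.apply_symm_apply v, CSPInstance.varDegree_relabel e.injective]
    exact hdeg _
  · rw [← he_inl v hv, CSPInstance.varDegree_relabel e.injective]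
    exact hdeg_inl _
  · rw [hsol false σ₀ σ₁ hσ₀ (hσ₁ 0) hsat]
    exact Nat.card_unique
  · rw [hsol true σ₁ σ₀ hσ₁ (hσ₀ 0) (fun σ => (hsat σ).trans or_comm)]
    exact Nat.card_unique
  · simp only [hends]
    rcases (hsat _).mp ((CSPInstance.sat_relabel _ _ _).mp hs) with h | h
    · exact Or.inl (h ▸ hσ₀)
    · exact Or.inr (h ▸ hσ₁)

namespace BoolRel

variable {r : ℕ} {R : BoolRel r}

/-- On the interval `[u, w]`, the restriction of `R` to the coordinates `i₁, i₀` is the implication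
`x_{i₁} → x_{i₀}`, and `u`, `w` are its only witnesses of `00` and `11`. -/
structure IsImplicationInterval (R : BoolRel r) (u w : Fin r → Bool) (i₁ i₀ : Fin r) : Prop where
  ne : i₁ ≠ i₀
  le : u ≤ w
  lower_mem : u ∈ R
  upper_mem : w ∈ R
  lower_left : u i₁ = false
  lower_right : u i₀ = false
  upper_left : w i₁ = true
  upper_right : w i₀ = true
  eq_upper : ∀ a ∈ R, a ∈ Set.Icc u w → a i₁ = true → a = w
  eq_lower : ∀ a ∈ R, a ∈ Set.Icc u w → a i₀ = false → a = u

lemma exists_minimal_interval_not_subset (hne : R ≠ Set.univ) (h0 : ⊥ ∈ R) (h1 : ⊤ ∈ R) :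
    ∃ u ∈ R, ∃ w ∈ R, ¬ Set.Icc u w ⊆ R ∧
      ∀ u' ∈ R, ∀ w' ∈ R, u ≤ u' → w' ≤ w → ¬ Set.Icc u' w' ⊆ R → u' = u ∧ w' = w := by
  -- In this product order, `(u', w') ≤ (u, w)` says `[u', w'] ⊆ [u, w]`.
  set S : Set ((Fin r → Bool)ᵒᵈ × (Fin r → Bool)) :=
    {p | OrderDual.ofDual p.1 ∈ R ∧ p.2 ∈ R ∧ ¬ Set.Icc (OrderDual.ofDual p.1) p.2 ⊆ R}
  have hS : S.Nonempty := ⟨(OrderDual.toDual ⊥, ⊤), h0, h1, by simpa using hne⟩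
  obtain ⟨⟨u, w⟩, ⟨hu, hw, hbad⟩, hmin⟩ := S.toFinite.exists_minimal hS
  refine ⟨u, hu, w, hw, hbad, fun u' hu' w' hw' hle hle' hbad' => ?_⟩
  have := hmin (y := (OrderDual.toDual u', w')) ⟨hu', hw', hbad'⟩ ⟨hle, hle'⟩
  exact ⟨le_antisymm this.1 hle, le_antisymm hle' this.2⟩

/-- In a minimal interval `[u, w]` not contained in `R`, every point of `R` other than the
endpoints is the relative complement of every point outside `R`. -/
lemma inf_eq_and_sup_eq_of_minimal {u w t a : Fin r → Bool} (hu : u ∈ R) (hw : w ∈ R)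
    (hmin : ∀ u' ∈ R, ∀ w' ∈ R, u ≤ u' → w' ≤ w → ¬ Set.Icc u' w' ⊆ R → u' = u ∧ w' = w)
    (ht : t ∈ Set.Icc u w) (htR : t ∉ R) (ha : a ∈ Set.Icc u w) (haR : a ∈ R)
    (hau : a ≠ u) (haw : a ≠ w) : t ⊓ a = u ∧ t ⊔ a = w := by
  have hlower : Set.Icc u a ⊆ R := by
    by_contra h
    exact haw (hmin u hu a haR le_rfl ha.2 h).2
  have hupper : Set.Icc a w ⊆ R := by
    by_contra h
    exact hau (hmin a haR w hw ha.1 le_rfl h).1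
  refine hmin _ (hlower ⟨le_inf ht.1 ha.1, inf_le_right⟩) _
    (hupper ⟨le_sup_right, sup_le ht.2 ha.2⟩) (le_inf ht.1 ha.1) (sup_le ht.2 ha.2) ?_
  exact fun h => htR (h ⟨inf_le_left, le_sup_left⟩)

lemma exists_isImplicationInterval (hne : R ≠ Set.univ) (h0 : ⊥ ∈ R) (h1 : ⊤ ∈ R) :
    ∃ u w i₁ i₀, IsImplicationInterval R u w i₁ i₀ := by
  obtain ⟨u, hu, w, hw, hbad, hmin⟩ := exists_minimal_interval_not_subset hne h0 h1
  obtain ⟨t, ht, htR⟩ := Set.not_subset.mp hbad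
  obtain ⟨i₁, hi₁⟩ : ∃ i, u i ≠ t i := Function.ne_iff.mp fun h => htR (h ▸ hu)
  obtain ⟨i₀, hi₀⟩ : ∃ i, t i ≠ w i := Function.ne_iff.mp fun h => htR (h ▸ hw)
  have hu₁ : u i₁ = false ∧ t i₁ = true := Bool.lt_iff.mp (lt_of_le_of_ne (ht.1 i₁) hi₁)
  have hw₀ : t i₀ = false ∧ w i₀ = true := Bool.lt_iff.mp (lt_of_le_of_ne (ht.2 i₀) hi₀)
  have hcompl : ∀ a ∈ R, a ∈ Set.Icc u w → a ≠ u → a ≠ w → t ⊓ a = u ∧ t ⊔ a = w :=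
    fun a haR ha hau haw => inf_eq_and_sup_eq_of_minimal hu hw hmin ht htR ha haR hau haw
  refine ⟨u, w, i₁, i₀, ⟨?_, ht.1.trans ht.2, hu, hw, hu₁.1, ?_, ?_, hw₀.2, ?_, ?_⟩⟩
  · exact fun h => by simp [h, hw₀.1] at hu₁
  · simpa [hw₀.1] using Bool.le_iff_imp.mp (ht.1 i₀)
  · simpa [hu₁.2] using Bool.le_iff_imp.mp (ht.2 i₁)
  · intro a haR ha ha₁
    by_contra haw
    have hau : a ≠ u := fun h => by simp [h, hu₁.1] at ha₁
    have := congrFun (hcompl a haR ha hau haw).1 i₁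
    simp [hu₁, ha₁] at this
  · intro a haR ha ha₀
    by_contra hau
    have haw : a ≠ w := fun h => by simp [h, hw₀.2] at ha₀
    have := congrFun (hcompl a haR ha hau haw).2 i₀
    simp [hw₀, ha₀] at this

end BoolRel

namespace BoolRel

variable {r : ℕ} (i₁ i₀ : Fin r) (k : ℕ)

/-- The endpoints `x_j`, and a fresh variable `(j, i)` for each coordinate `i ∉ {i₁, i₀}` of the
`j`-th copy of the relation. -/
abbrev CycleVar : Type := Fin k ⊕ (Fin k × {i : Fin r // i ≠ i₁ ∧ i ≠ i₀})

def cycleSolution (u w : Fin r → Bool) (b : Bool) : CycleVar i₁ i₀ k → Bool :=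
  Sum.elim (fun _ => b) fun p => (bif b then w else u) p.2

variable [NeZero k]

def cycleScope (j : Fin k) (i : Fin r) : CycleVar i₁ i₀ k :=
  if h₁ : i = i₁ then .inl j else if h₀ : i = i₀ then .inl (j + 1) else .inr (j, ⟨i, h₁, h₀⟩)

/-- `k` copies of `R` in a cycle, the `j`-th one reading `x_j` at `i₁` and `x_{j+1}` at `i₀`, with
every fresh variable pinned to `u` where `u` and `w` agree. -/
noncomputable def implicationCycle (R : BoolRel r) (u w : Fin r → Bool) :
    CSPInstance (CycleVar i₁ i₀ k) :=
  ⟨(List.finRange k).map (fun j => ⟨r, R, cycleScope i₁ i₀ k j⟩) ++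
    (Finset.univ.filter fun p : Fin k × {i : Fin r // i ≠ i₁ ∧ i ≠ i₀} => u p.2 = w p.2).toList.map
      fun p => Constraint.pin (.inr p) (u p.2)⟩

variable {i₁ i₀ k} {R : BoolRel r} {u w : Fin r → Bool}

lemma cycleScope_left (j : Fin k) : cycleScope i₁ i₀ k j i₁ = .inl j := dif_pos rfl

lemma cycleScope_right (h : i₁ ≠ i₀) (j : Fin k) : cycleScope i₁ i₀ k j i₀ = .inl (j + 1) := by
  simp [cycleScope, h.symm]

lemma cycleScope_eq_inl {j c : Fin k} {i : Fin r} (h : cycleScope i₁ i₀ k j i = .inl c) :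
    (j, i) = (c, i₁) ∨ (j, i) = (c - 1, i₀) := by
  unfold cycleScope at h
  split_ifs at h with h₁ h₀
  · obtain rfl := Sum.inl.inj h
    simp [h₁]
  · obtain rfl := Sum.inl.inj h
    simp [h₀]

lemma cycleScope_eq_inr {j : Fin k} {i : Fin r} {p : Fin k × {i : Fin r // i ≠ i₁ ∧ i ≠ i₀}}
    (h : cycleScope i₁ i₀ k j i = .inr p) : (j, i) = (p.1, p.2.val) := by
  unfold cycleScope at h
  split_ifs at h
  cases h
  rfl

lemma sat_implicationCycle (σ : CycleVar i₁ i₀ k → Bool) :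
    (implicationCycle i₁ i₀ k R u w).sat σ ↔
      (∀ j, σ ∘ cycleScope i₁ i₀ k j ∈ R) ∧ ∀ p, u p.2 = w p.2 → σ (.inr p) = u p.2 := by
  simp only [implicationCycle, CSPInstance.sat, List.mem_append, List.mem_map, List.mem_finRange,
    Finset.mem_toList, Finset.mem_filter, Finset.mem_univ, true_and, or_imp, forall_and,
    forall_exists_index, and_imp, forall_apply_eq_imp_iff₂, Constraint.sat_pin]
  exact and_congr_left' ⟨fun h j => h _ j rfl, fun h _ j hc => hc ▸ h j⟩

lemma varDegree_implicationCycle (v : CycleVar i₁ i₀ k) :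
    varDegree (implicationCycle i₁ i₀ k R u w) v =
      (Finset.univ.filter fun q : Fin k × Fin r => cycleScope i₁ i₀ k q.1 q.2 = v).card +
      (Finset.univ.filter fun p : Fin k × {i : Fin r // i ≠ i₁ ∧ i ≠ i₀} =>
        u p.2 = w p.2 ∧ .inr p = v).card := by
  simp only [varDegree, implicationCycle, List.map_append, List.sum_append, List.map_map]
  congr 1
  · rw [← Fin.sum_univ_def, Finset.card_filter, Fintype.sum_prod_type]
    simp only [Function.comp_apply, Finset.card_filter]
  · rw [Finset.sum_map_toList, ← Finset.filter_filter, Finset.card_filter]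
    simp only [Function.comp_apply, Constraint.card_pin_scope_eq]

lemma varDegree_implicationCycle_inl_le (c : Fin k) :
    varDegree (implicationCycle i₁ i₀ k R u w) (.inl c) ≤ 2 := by
  have hmain : (Finset.univ.filter fun q : Fin k × Fin r => cycleScope i₁ i₀ k q.1 q.2 = .inl c)
      ⊆ {(c, i₁), (c - 1, i₀)} := fun q hq => by
    simpa using cycleScope_eq_inl (Finset.mem_filter.mp hq).2
  rw [varDegree_implicationCycle]
  simpa using (Finset.card_le_card hmain).trans Finset.card_le_two

lemma varDegree_implicationCycle_le (v : CycleVar i₁ i₀ k) :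
    varDegree (implicationCycle i₁ i₀ k R u w) v ≤ 3 := by
  rcases v with c | p
  · exact (varDegree_implicationCycle_inl_le c).trans (by norm_num)
  have hmain : (Finset.univ.filter fun q : Fin k × Fin r => cycleScope i₁ i₀ k q.1 q.2 = .inr p)
      ⊆ {(p.1, p.2.val)} := fun q hq => by
    simpa using cycleScope_eq_inr (Finset.mem_filter.mp hq).2
  have hpins : (Finset.univ.filter fun q : Fin k × {i : Fin r // i ≠ i₁ ∧ i ≠ i₀} =>
      u q.2 = w q.2 ∧ (.inr q : CycleVar i₁ i₀ k) = .inr p) ⊆ {p} := fun q hq => by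
    simpa using (Finset.mem_filter.mp hq).2.2
  rw [varDegree_implicationCycle]
  have := Finset.card_le_card hmain
  have := Finset.card_le_card hpins
  simp only [Finset.card_singleton] at *
  omega

lemma implicationCycle_over : (implicationCycle i₁ i₀ k R u w).over ({⟨r, R⟩} ∪ pinLang) := by
  intro c hc
  simp only [implicationCycle, List.mem_append, List.mem_map] at hc
  rcases hc with ⟨j, -, rfl⟩ | ⟨p, -, rfl⟩
  · exact Or.inl rfl
  · exact Or.inr (Constraint.pin_mem_pinLang _ _)

namespace IsImplicationInterval

lemma cycleSolution_comp_cycleScope (h : IsImplicationInterval R u w i₁ i₀) (b : Bool)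
    (j : Fin k) : cycleSolution i₁ i₀ k u w b ∘ cycleScope i₁ i₀ k j = bif b then w else u := by
  funext i
  simp only [Function.comp_apply, cycleScope]
  split_ifs <;> subst_vars <;> cases b <;>
    simp [cycleSolution, h.lower_left, h.lower_right, h.upper_left, h.upper_right]

lemma comp_cycleScope_mem_Icc (h : IsImplicationInterval R u w i₁ i₀) {σ : CycleVar i₁ i₀ k → Bool}
    (hpin : ∀ p, u p.2 = w p.2 → σ (.inr p) = u p.2) (j : Fin k) :
    σ ∘ cycleScope i₁ i₀ k j ∈ Set.Icc u w := by
  refine (Bool.mem_Icc_iff_of_le h.le).mpr fun i hi => ?_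
  by_cases h₁ : i = i₁
  · simp [h₁, h.lower_left, h.upper_left] at hi
  by_cases h₀ : i = i₀
  · simp [h₀, h.lower_right, h.upper_right] at hi
  simpa [cycleScope, h₁, h₀] using hpin (j, ⟨i, h₁, h₀⟩) hi

lemma eq_cycleSolution_of_sat (h : IsImplicationInterval R u w i₁ i₀)
    {σ : CycleVar i₁ i₀ k → Bool} (hσ : (implicationCycle i₁ i₀ k R u w).sat σ) :
    ∃ b, σ = cycleSolution i₁ i₀ k u w b := by
  obtain ⟨hmain, hpin⟩ := (sat_implicationCycle σ).mp hσ
  have hIcc := h.comp_cycleScope_mem_Icc hpin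
  have hstep (j : Fin k) (hj : σ (.inl j) = true) : σ (.inl (j + 1)) = true := by
    have hw := h.eq_upper _ (hmain j) (hIcc j) (by simpa [cycleScope_left] using hj)
    simpa [cycleScope_right h.ne, h.upper_right] using congrFun hw i₀
  obtain ⟨b, hb⟩ : ∃ b, ∀ c, σ (.inl c) = b := by
    by_cases hex : ∃ c, σ (.inl c) = true
    · obtain ⟨c, hc⟩ := hex
      exact ⟨true, Fin.forall_of_imp_add_one hstep hc⟩
    · exact ⟨false, by simpa using hex⟩
  have htuple (j : Fin k) : σ ∘ cycleScope i₁ i₀ k j = bif b then w else u := by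
    cases b
    · exact h.eq_lower _ (hmain j) (hIcc j) (by simp [cycleScope_right h.ne, hb])
    · exact h.eq_upper _ (hmain j) (hIcc j) (by simp [cycleScope_left, hb])
  refine ⟨b, funext fun v => ?_⟩
  rcases v with c | ⟨j, i, hi⟩
  · exact hb c
  · simpa [cycleScope, hi.1, hi.2, cycleSolution] using congrFun (htuple j) i

lemma sat_cycleSolution (h : IsImplicationInterval R u w i₁ i₀) (b : Bool) :
    (implicationCycle i₁ i₀ k R u w).sat (cycleSolution i₁ i₀ k u w b) := by
  refine (sat_implicationCycle _).mpr ⟨fun j => ?_, fun p hp => ?_⟩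
  · rw [h.cycleSolution_comp_cycleScope]
    cases b
    exacts [h.lower_mem, h.upper_mem]
  · cases b <;> simp [cycleSolution, hp]

lemma sat_implicationCycle_iff (h : IsImplicationInterval R u w i₁ i₀)
    (σ : CycleVar i₁ i₀ k → Bool) :
    (implicationCycle i₁ i₀ k R u w).sat σ ↔
      σ = cycleSolution i₁ i₀ k u w false ∨ σ = cycleSolution i₁ i₀ k u w true := by
  constructor
  · intro hσ
    obtain ⟨b, rfl⟩ := h.eq_cycleSolution_of_sat hσ
    cases b <;> simp
  · rintro (rfl | rfl) <;> exact h.sat_cycleSolution _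

theorem simulatesEqK (h : IsImplicationInterval R u w i₁ i₀) (k : ℕ) [NeZero k] :
    simulatesEqK {⟨r, R⟩} 3 k :=
  simulatesEqK_of_two_solutions (implicationCycle i₁ i₀ k R u w) implicationCycle_over
    varDegree_implicationCycle_le varDegree_implicationCycle_inl_le _ _
    (fun _ => rfl) (fun _ => rfl) h.sat_implicationCycle_iff

end IsImplicationInterval

end BoolRel

theorem simulates_equality_of_valid_not_complete_general (r : ℕ) (R : BoolRel r)
    (h0 : (fun _ => false) ∈ R) (h1 : (fun _ => true) ∈ R) (hne : R ≠ Set.univ) :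
    relSimulatesEq R 3 := by
  obtain ⟨u, w, i₁, i₀, h⟩ := BoolRel.exists_isImplicationInterval hne h0 h1
  intro k hk
  have : NeZero k := ⟨by omega⟩
  exact h.simulatesEqK k

/-- If `r ≥ 2` and `R ⊆ {0,1}^r` is 0-valid and 1-valid but not complete,
then `R` 3-simulates equality. -/
theorem simulates_equality_of_valid_not_complete (r : ℕ) (hr : 2 ≤ r) (R : BoolRel r)
    (h0 : (fun _ => false) ∈ R) (h1 : (fun _ => true) ∈ R) (hne : R ≠ Set.univ) :
    relSimulatesEq R 3 :=
  simulates_equality_of_valid_not_complete_general r R h0 h1 hne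
end

section
/- Let R and R' be Boolean relations (not necessarily distinct) such that R_OR ≤ppp R and R_NAND ≤ppp R'. Then the constraint language {R, R'} 3-simulates equality. -/
/-!
Pinning and projecting turns `R` into a gadget for `R_OR` and `R'` into one for `R_NAND`, with
unpinned boundary coordinates. Put `4k` such gadgets, alternately NAND and OR, around a cycle
`x₀ z₀ y₀ z'₀ x₁ z₁ …` of nodes. Negating the `z`-nodes turns both NAND and OR into an implication
along the cycle, so in every solution the `x`'s and `y`'s share one value `c` and the `z`'s carry
`!c`. The second NAND and the second OR gadget of every block are attached backwards, so in both
patterns each gadget type sees the boundary values `(0,1)` once and `(1,0)` once per block;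
exchanging the internal variables of the two gadgets of each type within every block is therefore
a bijection between the solutions with all `x`'s `0` and those with all `x`'s `1`. Every variable
lies in at most one OR gadget, one NAND gadget and one pin, and the `x`'s lie in no pin.
-/

open Function Finset

theorem exists_pin_proj_of_reflTransGen {r : ℕ} {R : BoolRel r} {X : Σ n, BoolRel n}
    (h : Relation.ReflTransGen pppStep ⟨r, R⟩ X) :
    ∃ (φ : Fin X.1 → Fin r) (P : Set (Fin r × Bool)), Injective φ ∧
      ∀ a, a ∈ X.2 ↔ ∃ b ∈ R, (∀ p ∈ P, b p.1 = p.2) ∧ b ∘ φ = a := by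
  induction h with
  | refl => exact ⟨id, ∅, injective_id, fun a => by simp⟩
  | tail _ hstep ih =>
    obtain ⟨φ, P, hφ, hspec⟩ := ih
    cases hstep with
    | perm S π =>
      refine ⟨φ ∘ π.symm, P, hφ.comp π.symm.injective, fun a => (hspec _).trans ?_⟩
      refine exists_congr fun b => and_congr_right fun _ => and_congr_right fun _ => ?_
      exact (π.comp_symm_eq a (b ∘ φ)).symm
    | pin S i c =>
      refine ⟨φ, insert (φ i, c) P, hφ, fun a => ?_⟩
      simp only [Set.mem_ofPred_eq, hspec, Set.forall_mem_insert]
      constructor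
      · rintro ⟨⟨b, hb, hP, rfl⟩, hc⟩
        exact ⟨b, hb, ⟨hc, hP⟩, rfl⟩
      · rintro ⟨b, hb, ⟨hc, hP⟩, rfl⟩
        exact ⟨⟨b, hb, hP, rfl⟩, hc⟩
    | proj S i =>
      refine ⟨φ ∘ i.succAbove, P, hφ.comp Fin.succAbove_right_injective, fun a => ?_⟩
      simp only [Set.mem_ofPred_eq, hspec]
      constructor
      · rintro ⟨_, ⟨b, hb, hP, rfl⟩, rfl⟩
        exact ⟨b, hb, hP, rfl⟩
      · rintro ⟨b, hb, hP, rfl⟩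
        exact ⟨_, ⟨b, hb, hP, rfl⟩, rfl⟩

structure Gadget {r n : ℕ} (R : BoolRel r) (S : BoolRel n) where
  φ : Fin n → Fin r
  φ_injective : Injective φ
  pinned : Finset (Fin r)
  pinVal : Fin r → Bool
  φ_notMem_pinned : ∀ m, φ m ∉ pinned
  mem_iff : ∀ a, a ∈ S ↔ ∃ b ∈ R, (∀ j ∈ pinned, b j = pinVal j) ∧ b ∘ φ = a

theorem Gadget.nonempty_of_pppLE {r n : ℕ} {R : BoolRel r} {S : BoolRel n} (h : pppLE S R)
    (hne : S.Nonempty) (hcol : ∀ m, ¬ constCol S m) : Nonempty (Gadget R S) := by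
  classical
  obtain ⟨φ, P, hφ, hspec⟩ := exists_pin_proj_of_reflTransGen h
  obtain ⟨b₀, hb₀, hP₀, -⟩ := (hspec _).1 hne.some_mem
  have hpins : ∀ b : Fin r → Bool, (∀ p ∈ P, b p.1 = p.2) ↔
      ∀ j ∈ Finset.univ.filter (fun j => ∃ c, (j, c) ∈ P), b j = b₀ j := by
    intro b
    simp only [Finset.mem_filter, Finset.mem_univ, true_and, forall_exists_index]
    exact ⟨fun hb j c hjc => (hb _ hjc).trans (hP₀ _ hjc).symm,
      fun hb p hp => (hb p.1 p.2 hp).trans (hP₀ p hp)⟩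
  refine ⟨⟨φ, hφ, Finset.univ.filter (fun j => ∃ c, (j, c) ∈ P), b₀, fun m hm => hcol m ?_,
    fun a => by simp only [hspec, hpins]⟩⟩
  obtain ⟨c, hc⟩ := (Finset.mem_filter.1 hm).2
  intro a ha a' ha'
  obtain ⟨b, -, hb, rfl⟩ := (hspec a).1 ha
  obtain ⟨b', -, hb', rfl⟩ := (hspec a').1 ha'
  exact (hb _ hc).trans (hb' _ hc).symm

namespace Gadget

variable {r n : ℕ} {R : BoolRel r} {S : BoolRel n} (G : Gadget R S)

/-- `b` supplies the values of the coordinates off the boundary; its values on the range of `φ`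
are ignored. -/
def Accepts (x : Fin n → Bool) (b : Fin r → Bool) : Prop :=
  extend G.φ x b ∈ R ∧ ∀ j ∈ G.pinned, b j = G.pinVal j

theorem mem_of_accepts {x : Fin n → Bool} {b : Fin r → Bool} (h : G.Accepts x b) : x ∈ S := by
  refine (G.mem_iff x).2 ⟨_, h.1, fun j hj => ?_, extend_comp G.φ_injective x b⟩
  rw [extend_apply' _ _ _ (by rintro ⟨m, rfl⟩; exact G.φ_notMem_pinned m hj)]
  exact h.2 j hj

theorem exists_accepts {x : Fin n → Bool} (hx : x ∈ S) : ∃ b, G.Accepts x b := by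
  obtain ⟨b, hb, hpin, rfl⟩ := (G.mem_iff x).1 hx
  refine ⟨b, ?_, hpin⟩
  convert hb using 1
  funext j
  by_cases hj : ∃ m, G.φ m = j
  · obtain ⟨m, rfl⟩ := hj
    exact G.φ_injective.extend_apply _ _ m
  · exact extend_apply' _ _ _ hj

end Gadget

section Instances

variable {V W : Type}

def Constraint.map (f : V → W) (c : Constraint V) : Constraint W := ⟨c.arity, c.rel, f ∘ c.scope⟩

def CSPInstance.map (f : V → W) (I : CSPInstance V) : CSPInstance W :=
  ⟨I.constraints.map (Constraint.map f)⟩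

theorem CSPInstance.sat_map (f : V → W) (I : CSPInstance V) (σ : W → Bool) :
    (I.map f).sat σ ↔ I.sat (σ ∘ f) := by
  simp [CSPInstance.sat, CSPInstance.map, Constraint.sat, Constraint.map]

theorem CSPInstance.over_map (f : V → W) (I : CSPInstance V) (Γ : Set (Σ r, BoolRel r)) :
    (I.map f).over Γ ↔ I.over Γ := by
  simp [CSPInstance.over, CSPInstance.map, Constraint.map]

theorem varDegree_map [DecidableEq V] [DecidableEq W] {f : V → W} (hf : Injective f)
    (I : CSPInstance V) (v : V) : varDegree (I.map f) (f v) = varDegree I v := by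
  simp only [varDegree, CSPInstance.map, List.map_map]
  refine congrArg List.sum (List.map_congr_left fun c _ => ?_)
  show #{i : Fin c.arity | f (c.scope i) = f v} = _
  simp only [hf.eq_iff]

noncomputable def CSPInstance.ofFamily {E : Type} [Fintype E] (c : E → Constraint V) :
    CSPInstance V :=
  ⟨Finset.univ.toList.map c⟩

variable {E : Type} [Fintype E]

theorem CSPInstance.sat_ofFamily (c : E → Constraint V) (σ : V → Bool) :
    (CSPInstance.ofFamily c).sat σ ↔ ∀ e, (c e).sat σ := by
  simp [CSPInstance.ofFamily, CSPInstance.sat]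

theorem CSPInstance.over_ofFamily (c : E → Constraint V) (Γ : Set (Σ r, BoolRel r)) :
    (CSPInstance.ofFamily c).over Γ ↔ ∀ e, (⟨(c e).arity, (c e).rel⟩ : Σ r, BoolRel r) ∈ Γ := by
  simp [CSPInstance.ofFamily, CSPInstance.over]

theorem varDegree_ofFamily [DecidableEq V] (c : E → Constraint V) (v : V) :
    varDegree (CSPInstance.ofFamily c) v = ∑ e, #{p | (c e).scope p = v} := by
  simp [varDegree, CSPInstance.ofFamily, Finset.sum_map_toList]

theorem sum_card_scope_eq_le_one {n : ℕ} [DecidableEq V] {s : E → Fin n → V}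
    (hs : Injective (uncurry s)) (v : V) : ∑ e, #{p | s e p = v} ≤ 1 := by
  calc ∑ e, #{p | s e p = v} = #{q : E × Fin n | uncurry s q = v} := by
        simp only [card_filter, Fintype.sum_prod_type, uncurry_apply_pair]
        rfl
    _ ≤ 1 := Finset.card_le_one.2 fun a ha b hb => hs <| by simp_all

end Instances

theorem exists_equiv_fin_extending {V : Type} [Fintype V] {k : ℕ} {x : Fin k → V}
    (hx : Injective x) : ∃ (ℓ : ℕ) (e : V ≃ Fin ℓ), k ≤ ℓ ∧ ∀ i, (e (x i) : ℕ) = i := by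
  classical
  let U := ↥(Set.range x)ᶜ
  let e₁ : Fin k ⊕ U ≃ V :=
    ((Equiv.ofInjective x hx).sumCongr (Equiv.refl U)).trans (Equiv.Set.sumCompl _)
  let e₂ : Fin k ⊕ U ≃ Fin (k + Fintype.card U) :=
    ((Equiv.refl _).sumCongr (Fintype.equivFin U)).trans finSumFinEquiv
  refine ⟨_, e₁.symm.trans e₂, Nat.le_add_right _ _, fun i => ?_⟩
  have : e₁.symm (x i) = Sum.inl i := e₁.symm_apply_eq.2 rfl
  simp [this, e₂]

theorem simulatesEqK_of_injective {V : Type} [Fintype V] [DecidableEq V]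
    {Γ : Set (Σ r, BoolRel r)} {d k : ℕ} (I : CSPInstance V) {x : Fin k → V} (hx : Injective x)
    (hover : I.over (Γ ∪ pinLang)) (hdeg : ∀ v, varDegree I v ≤ d)
    (hdegx : ∀ i, varDegree I (x i) ≤ d - 1)
    (hne : ∃ σ, I.sat σ ∧ ∀ i, σ (x i) = false)
    (hcard : Nat.card {σ // I.sat σ ∧ ∀ i, σ (x i) = false} =
      Nat.card {σ // I.sat σ ∧ ∀ i, σ (x i) = true})
    (hdich : ∀ σ, I.sat σ → (∀ i, σ (x i) = false) ∨ (∀ i, σ (x i) = true)) :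
    simulatesEqK Γ d k := by
  obtain ⟨ℓ, e, hkℓ, he⟩ := exists_equiv_fin_extending hx
  have hlt : ∀ (σ : Fin ℓ → Bool) (c : Bool),
      (∀ w : Fin ℓ, (w : ℕ) < k → σ w = c) ↔ ∀ i, (σ ∘ e) (x i) = c := by
    refine fun σ c => ⟨fun h i => h _ (by simp [he]), fun h w hw => ?_⟩
    simpa [show e (x ⟨w, hw⟩) = w from Fin.ext (he _)] using h ⟨w, hw⟩
  have hcount : ∀ c, Nat.card {σ : Fin ℓ → Bool |
      (I.map e).sat σ ∧ ∀ w : Fin ℓ, (w : ℕ) < k → σ w = c} =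
        Nat.card {σ // I.sat σ ∧ ∀ i, σ (x i) = c} := fun c =>
    Nat.card_congr <| (e.arrowCongr (Equiv.refl Bool)).symm.subtypeEquiv fun σ => by
      simp [CSPInstance.sat_map, hlt, Equiv.arrowCongr]
  refine ⟨ℓ, hkℓ, I.map e, (I.over_map e _).2 hover, fun w => ?_, fun w hw => ?_, _, ?_,
    rfl, (hcount true).trans (hcard.symm.trans (hcount false).symm), fun σ hσ => ?_⟩
  · simpa using (varDegree_map e.injective I (e.symm w)).trans_le (hdeg _)
  · rw [← show e (x ⟨w, hw⟩) = w from Fin.ext (he _), varDegree_map e.injective]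
    exact hdegx _
  · obtain ⟨σ, hσ⟩ := hne
    have : Nonempty {σ // I.sat σ ∧ ∀ i, σ (x i) = false} := ⟨⟨σ, hσ⟩⟩
    rw [hcount false]
    exact Nat.card_pos
  · simpa only [hlt] using hdich _ ((I.sat_map e σ).1 hσ)

open Fin.NatCast in
theorem le_of_forall_le_finRotate {α : Type*} [Preorder α] {k : ℕ} {f : Fin k → α}
    (h : ∀ i, f i ≤ f (finRotate k i)) (i j : Fin k) : f i ≤ f j := by
  cases k with
  | zero => exact i.elim0
  | succ k =>
    have key : ∀ n : ℕ, f i ≤ f (i + (n : Fin (k + 1))) := by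
      intro n
      induction n with
      | zero => simp
      | succ n ih => simpa [add_assoc] using ih.trans (h (i + n))
    simpa using key (j - i : Fin (k + 1)).val

theorem mem_ROR_iff_not_le (a : Fin 2 → Bool) : a ∈ ROR ↔ (!a 0) ≤ a 1 := by
  simp only [ROR, Set.mem_ofPred_eq]
  cases a 0 <;> cases a 1 <;> decide

theorem mem_RNAND_iff_le_not (a : Fin 2 → Bool) : a ∈ RNAND ↔ a 0 ≤ !a 1 := by
  simp only [RNAND, Set.mem_ofPred_eq]
  cases a 0 <;> cases a 1 <;> decide

theorem Constraint.sat_pin_s5 {V : Type} (c : Bool) (v : V) (σ : V → Bool) :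
    (⟨1, if c then Rone else Rzero, fun _ => v⟩ : Constraint V).sat σ ↔ σ v = c := by
  cases c <;> simp [Constraint.sat, Rone, Rzero]

theorem Constraint.sat_extend {V : Type} {n r : ℕ} (R : BoolRel r) (φ : Fin n → Fin r)
    (g : Fin n → V) (w : Fin r → V) (σ : V → Bool) :
    (⟨r, R, extend φ g w⟩ : Constraint V).sat σ ↔ extend φ (σ ∘ g) (σ ∘ w) ∈ R := by
  simp only [Constraint.sat]
  congr!
  exact apply_extend σ φ w _

theorem injective_uncurry_extend {E α β A B : Type*} {φ : α → β} (hφ : Injective φ)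
    {g : E → α → A} {w : E → β → B} (hg : Injective (uncurry g)) (hw : Injective (uncurry w)) :
    Injective (uncurry fun e => extend φ (Sum.inl ∘ g e) (Sum.inr ∘ w e)) := by
  rintro ⟨e, p⟩ ⟨e', p'⟩ h
  simp only [uncurry_apply_pair] at h
  by_cases hp : ∃ m, φ m = p <;> by_cases hp' : ∃ m, φ m = p'
  · obtain ⟨⟨m, rfl⟩, ⟨m', rfl⟩⟩ := And.intro hp hp'
    rw [hφ.extend_apply, hφ.extend_apply] at h
    obtain ⟨rfl, rfl⟩ := Prod.ext_iff.1 (@hg (e, m) (e', m') (Sum.inl_injective h))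
    rfl
  · obtain ⟨m, rfl⟩ := hp
    rw [hφ.extend_apply, extend_apply' _ _ _ hp'] at h
    cases h
  · obtain ⟨m, rfl⟩ := hp'
    rw [hφ.extend_apply, extend_apply' _ _ _ hp] at h
    cases h
  · rw [extend_apply' _ _ _ hp, extend_apply' _ _ _ hp'] at h
    exact hw (Sum.inr_injective h)

namespace Chain

variable (k : ℕ)

abbrev Node := Fin k × Fin 4

abbrev Edge := Fin k × Fin 2

abbrev Var (r r' : ℕ) := Node k ⊕ Edge k × (Fin r ⊕ Fin r')

variable {k}

/- Node `(i, q)` is `x_i, z_i, y_i, z'_i` for `q = 0, 1, 2, 3`. On the edge `(i, 0)` sit the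
gadgets `NAND(x_i, z_i)` and `OR(z_i, y_i)`, on `(i, 1)` the backward ones `NAND(z'_i, y_i)` and
`OR(x_{i+1}, z'_i)`. The internal variables of an edge's gadgets are `(e, j)`. -/

def orEnds (e : Edge k) : Fin 2 → Node k :=
  ![![(e.1, 1), (e.1, 2)], ![(finRotate k e.1, 0), (e.1, 3)]] e.2

def nandEnds (e : Edge k) : Fin 2 → Node k :=
  ![![(e.1, 0), (e.1, 1)], ![(e.1, 3), (e.1, 2)]] e.2

def pattern (c : Bool) (n : Node k) : Bool := ![c, !c, c, !c] n.2

theorem pattern_pattern (c : Bool) (n : Node k) : pattern (pattern c n) n = c := by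
  rcases n with ⟨i, q⟩
  fin_cases q <;> simp [pattern]

theorem pattern_orEnds_add_one (c : Bool) (e : Edge k) (m : Fin 2) :
    pattern c (orEnds (e.1, e.2 + 1) m) = pattern (!c) (orEnds e m) := by
  rcases e with ⟨i, g⟩
  fin_cases g <;> fin_cases m <;> simp [pattern, orEnds]

theorem pattern_nandEnds_add_one (c : Bool) (e : Edge k) (m : Fin 2) :
    pattern c (nandEnds (e.1, e.2 + 1) m) = pattern (!c) (nandEnds e m) := by
  rcases e with ⟨i, g⟩
  fin_cases g <;> fin_cases m <;> simp [pattern, nandEnds]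

theorem pattern_orEnds_one (c : Bool) (e : Edge k) :
    pattern c (orEnds e 1) = !pattern c (orEnds e 0) := by
  rcases e with ⟨i, g⟩
  fin_cases g <;> simp [pattern, orEnds]

theorem pattern_nandEnds_one (c : Bool) (e : Edge k) :
    pattern c (nandEnds e 1) = !pattern c (nandEnds e 0) := by
  rcases e with ⟨i, g⟩
  fin_cases g <;> simp [pattern, nandEnds]

theorem injective_uncurry_orEnds : Injective (uncurry (orEnds (k := k))) := by
  rintro ⟨⟨i, g⟩, m⟩ ⟨⟨i', g'⟩, m'⟩ h
  fin_cases g <;> fin_cases m <;> fin_cases g' <;> fin_cases m' <;> simp_all [orEnds]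

theorem injective_uncurry_nandEnds : Injective (uncurry (nandEnds (k := k))) := by
  rintro ⟨⟨i, g⟩, m⟩ ⟨⟨i', g'⟩, m'⟩ h
  fin_cases g <;> fin_cases m <;> fin_cases g' <;> fin_cases m' <;> simp_all [nandEnds]

variable {r r' : ℕ} {R : BoolRel r} {R' : BoolRel r'} (G : Gadget R ROR) (G' : Gadget R' RNAND)

noncomputable def orConstraint (e : Edge k) : Constraint (Var k r r') :=
  ⟨r, R, extend G.φ (Sum.inl ∘ orEnds e) (Sum.inr ∘ fun j => (e, Sum.inl j))⟩

noncomputable def nandConstraint (e : Edge k) : Constraint (Var k r r') :=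
  ⟨r', R', extend G'.φ (Sum.inl ∘ nandEnds e) (Sum.inr ∘ fun j => (e, Sum.inr j))⟩

def pinConstraint (p : Edge k × G.pinned.disjSum G'.pinned) : Constraint (Var k r r') :=
  ⟨1, if Sum.elim G.pinVal G'.pinVal p.2 then Rone else Rzero, fun _ => Sum.inr (p.1, p.2)⟩

variable (k) in
noncomputable def csp : CSPInstance (Var k r r') :=
  .ofFamily (Sum.elim (orConstraint G) (Sum.elim (nandConstraint G') (pinConstraint G G')))

def Accepts (σ : Var k r r' → Bool) : Prop :=
  ∀ e, G.Accepts (σ ∘ Sum.inl ∘ orEnds e) (fun j => σ (Sum.inr (e, Sum.inl j))) ∧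
    G'.Accepts (σ ∘ Sum.inl ∘ nandEnds e) (fun j => σ (Sum.inr (e, Sum.inr j)))

variable {G G'} {σ : Var k r r' → Bool}

theorem sat_csp_iff : (csp k G G').sat σ ↔ Accepts G G' σ := by
  simp only [csp, CSPInstance.sat_ofFamily, Sum.forall, Sum.elim_inl, Sum.elim_inr,
    orConstraint, nandConstraint, pinConstraint, Constraint.sat_extend, Constraint.sat_pin_s5,
    Prod.forall, Subtype.forall, Finset.inl_mem_disjSum, Finset.inr_mem_disjSum, Accepts,
    Gadget.Accepts, forall_and]
  tauto

/-- Negates the `z`-nodes: `NAND(a, b) ↔ a ≤ !b` and `OR(a, b) ↔ !a ≤ b`. -/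
def flipped (σ : Var k r r' → Bool) (n : Node k) : Bool := pattern (σ (Sum.inl n)) n

theorem flipped_le_of_accepts (hσ : Accepts G G' σ) (i : Fin k) :
    flipped σ (i, 0) ≤ flipped σ (i, 1) ∧ flipped σ (i, 1) ≤ flipped σ (i, 2) ∧
      flipped σ (i, 2) ≤ flipped σ (i, 3) ∧ flipped σ (i, 3) ≤ flipped σ (finRotate k i, 0) := by
  have h₁ := G'.mem_of_accepts (hσ (i, 0)).2
  have h₂ := G.mem_of_accepts (hσ (i, 0)).1
  have h₃ := G'.mem_of_accepts (hσ (i, 1)).2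
  have h₄ := G.mem_of_accepts (hσ (i, 1)).1
  simp [mem_ROR_iff_not_le, mem_RNAND_iff_le_not, orEnds, nandEnds, flipped, pattern,
    -finRotate_apply] at h₁ h₂ h₃ h₄ ⊢
  revert h₁ h₂ h₃ h₄
  cases σ (Sum.inl (i, 0)) <;> cases σ (Sum.inl (i, 1)) <;> cases σ (Sum.inl (i, 2)) <;>
    cases σ (Sum.inl (i, 3)) <;> cases σ (Sum.inl (finRotate k i, 0)) <;> decide

theorem eq_pattern_of_accepts (hσ : Accepts G G' σ) (i : Fin k) (n : Node k) :
    σ (Sum.inl n) = pattern (σ (Sum.inl (i, 0))) n := by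
  have hf := flipped_le_of_accepts hσ
  have hcycle : ∀ i j, flipped σ (i, 0) ≤ flipped σ (j, 0) := le_of_forall_le_finRotate fun i =>
    (hf i).1.trans <| (hf i).2.1.trans <| (hf i).2.2.1.trans (hf i).2.2.2
  obtain ⟨j, q⟩ := n
  obtain ⟨h₀₁, h₁₂, h₂₃, h₃₀⟩ := hf j
  have hlo : flipped σ (j, 0) ≤ flipped σ (j, q) := by
    fin_cases q
    exacts [le_rfl, h₀₁, h₀₁.trans h₁₂, h₀₁.trans (h₁₂.trans h₂₃)]
  have hhi : flipped σ (j, q) ≤ flipped σ (finRotate k j, 0) := by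
    fin_cases q
    exacts [h₀₁.trans (h₁₂.trans (h₂₃.trans h₃₀)), h₁₂.trans (h₂₃.trans h₃₀), h₂₃.trans h₃₀, h₃₀]
  have hq : flipped σ (j, q) = flipped σ (i, 0) :=
    le_antisymm (hhi.trans (hcycle _ _)) ((hcycle _ _).trans hlo)
  rw [← pattern_pattern (σ (Sum.inl (j, q))) (j, q)]
  exact congrArg (pattern · (j, q)) hq

def reflect (c : Bool) (σ : Var k r r' → Bool) : Var k r r' → Bool :=
  Sum.elim (pattern c) fun p => σ (Sum.inr ((p.1.1, p.1.2 + 1), p.2))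

theorem accepts_reflect (c : Bool) (hσ : Accepts G G' σ)
    (hc : ∀ n, σ (Sum.inl n) = pattern (!c) n) : Accepts G G' (reflect c σ) := by
  intro e
  have hor : σ ∘ Sum.inl ∘ orEnds (e.1, e.2 + 1) = reflect c σ ∘ Sum.inl ∘ orEnds e :=
    funext fun m => by simp [reflect, hc, pattern_orEnds_add_one]
  have hnand : σ ∘ Sum.inl ∘ nandEnds (e.1, e.2 + 1) = reflect c σ ∘ Sum.inl ∘ nandEnds e :=
    funext fun m => by simp [reflect, hc, pattern_nandEnds_add_one]
  rw [← hor, ← hnand]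
  exact hσ (e.1, e.2 + 1)

theorem reflect_reflect {c : Bool} (hc : ∀ n, σ (Sum.inl n) = pattern c n) (c' : Bool) :
    reflect c (reflect c' σ) = σ := by
  funext v
  rcases v with n | ⟨⟨i, g⟩, j⟩
  · exact (hc n).symm
  · simp [reflect, add_assoc, show (1 + 1 : Fin 2) = 0 from rfl]

variable (k G G') in
theorem exists_accepts_pattern (c : Bool) :
    ∃ σ : Var k r r' → Bool, Accepts G G' σ ∧ ∀ n, σ (Sum.inl n) = pattern c n := by
  have hor (e : Edge k) : ∃ b, G.Accepts (pattern c ∘ orEnds e) b :=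
    G.exists_accepts (by simp [mem_ROR_iff_not_le, pattern_orEnds_one])
  have hnand (e : Edge k) : ∃ b, G'.Accepts (pattern c ∘ nandEnds e) b :=
    G'.exists_accepts (by simp [mem_RNAND_iff_le_not, pattern_nandEnds_one])
  choose b hb using hor
  choose b' hb' using hnand
  exact ⟨Sum.elim (pattern c) fun p => Sum.elim (b p.1) (b' p.1) p.2, fun e => ⟨hb e, hb' e⟩,
    fun n => rfl⟩

theorem varDegree_csp (v : Var k r r') :
    varDegree (csp k G G') v = ∑ e, #{p | (orConstraint G e).scope p = v} +
      (∑ e, #{p | (nandConstraint G' e).scope p = v} +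
        ∑ q, #{p | (pinConstraint G G' q).scope p = v}) := by
  simp only [csp, varDegree_ofFamily, Fintype.sum_sum_type, Sum.elim_inl, Sum.elim_inr]
  rfl

theorem sum_card_orConstraint_le_one (v : Var k r r') :
    ∑ e, #{p | (orConstraint G e).scope p = v} ≤ 1 :=
  sum_card_scope_eq_le_one (injective_uncurry_extend G.φ_injective injective_uncurry_orEnds
    (by rintro ⟨⟩ ⟨⟩ h; simp_all)) v

theorem sum_card_nandConstraint_le_one (v : Var k r r') :
    ∑ e, #{p | (nandConstraint G' e).scope p = v} ≤ 1 :=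
  sum_card_scope_eq_le_one (injective_uncurry_extend G'.φ_injective injective_uncurry_nandEnds
    (by rintro ⟨⟩ ⟨⟩ h; simp_all)) v

theorem sum_card_pinConstraint_le_one (v : Var k r r') :
    ∑ q, #{p | (pinConstraint G G' q).scope p = v} ≤ 1 := by
  have hinj : Injective (uncurry fun (q : Edge k × G.pinned.disjSum G'.pinned) (_ : Fin 1) =>
      (Sum.inr (q.1, q.2) : Var k r r')) := by
    rintro ⟨⟨e, j, hj⟩, t⟩ ⟨⟨e', j', hj'⟩, t'⟩ h
    simp only [uncurry_apply_pair, Sum.inr.injEq, Prod.mk.injEq] at h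
    obtain ⟨rfl, rfl⟩ := h
    rw [Subsingleton.elim t t']
  exact sum_card_scope_eq_le_one hinj v

theorem varDegree_csp_le (v : Var k r r') : varDegree (csp k G G') v ≤ 3 := by
  have := sum_card_orConstraint_le_one (G := G) v
  have := sum_card_nandConstraint_le_one (G' := G') v
  have := sum_card_pinConstraint_le_one (G := G) (G' := G') v
  rw [varDegree_csp]
  omega

theorem varDegree_csp_inl_le (n : Node k) :
    varDegree (csp k G G') (Sum.inl n : Var k r r') ≤ 2 := by
  have := sum_card_orConstraint_le_one (G := G) (.inl n : Var k r r')
  have := sum_card_nandConstraint_le_one (G' := G') (.inl n : Var k r r')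
  rw [varDegree_csp]
  simp [pinConstraint]
  omega

variable (k G G') in
theorem csp_over : (csp k G G').over (({⟨r, R⟩, ⟨r', R'⟩} : Set (Σ n, BoolRel n)) ∪ pinLang) := by
  simp only [csp, CSPInstance.over_ofFamily, Sum.forall, Sum.elim_inl, Sum.elim_inr]
  refine ⟨fun _ => Or.inl (Or.inl rfl), fun _ => Or.inl (Or.inr rfl), fun q => Or.inr ?_⟩
  simp only [pinConstraint]
  split_ifs <;> simp [pinLang]

theorem simulatesEqK_of_gadgets (k : ℕ) (G : Gadget R ROR) (G' : Gadget R' RNAND) :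
    simulatesEqK ({⟨r, R⟩, ⟨r', R'⟩} : Set (Σ n, BoolRel n)) 3 k := by
  have hpat {σ : Var k r r' → Bool} {c : Bool} (hσ : (csp k G G').sat σ)
      (hc : ∀ i, σ (.inl (i, 0)) = c) (n : Node k) : σ (.inl n) = pattern c n := by
    rw [eq_pattern_of_accepts (sat_csp_iff.1 hσ) n.1 n, hc]
  refine simulatesEqK_of_injective (csp k G G') (x := fun i => .inl (i, 0))
    (fun i j h => by simpa using h) (csp_over k G G') varDegree_csp_le
    (fun i => varDegree_csp_inl_le _) ?_ ?_ fun σ hσ => ?_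
  · obtain ⟨σ, hσ, hc⟩ := exists_accepts_pattern k G G' false
    exact ⟨σ, sat_csp_iff.2 hσ, fun i => hc _⟩
  · refine Nat.card_congr
      { toFun := fun σ => ⟨reflect true σ.1,
          sat_csp_iff.2 <| accepts_reflect true (sat_csp_iff.1 σ.2.1) (hpat σ.2.1 σ.2.2),
          fun i => rfl⟩
        invFun := fun σ => ⟨reflect false σ.1,
          sat_csp_iff.2 <| accepts_reflect false (sat_csp_iff.1 σ.2.1) (hpat σ.2.1 σ.2.2),
          fun i => rfl⟩
        left_inv := fun σ => Subtype.ext (reflect_reflect (hpat σ.2.1 σ.2.2) true)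
        right_inv := fun σ => Subtype.ext (reflect_reflect (hpat σ.2.1 σ.2.2) false) }
  · by_cases h : ∃ i, σ (.inl (i, 0)) = true
    · obtain ⟨i, hi⟩ := h
      exact .inr fun j => by rw [eq_pattern_of_accepts (sat_csp_iff.1 hσ) i, hi]; rfl
    · exact .inl fun i => by simpa using not_exists.1 h i

end Chain

/-- If `R_OR ≤ppp R` and `R_NAND ≤ppp R'`, then `{R, R'}` 3-simulates equality. -/
theorem simulates_equality_of_OR_and_NAND (r r' : ℕ) (R : BoolRel r) (R' : BoolRel r')
    (hOR : pppLE ROR R) (hNAND : pppLE RNAND R') :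
    simulatesEq ({⟨r, R⟩, ⟨r', R'⟩} : Set (Σ n, BoolRel n)) 3 := by
  have h₁₀ : ![true, false] ∈ ROR ∩ RNAND := by simp [ROR, RNAND]
  have h₀₁ : ![false, true] ∈ ROR ∩ RNAND := by simp [ROR, RNAND]
  have hcol (m : Fin 2) {S : BoolRel 2} (h₁₀ : ![true, false] ∈ S) (h₀₁ : ![false, true] ∈ S) :
      ¬ constCol S m := fun h => by fin_cases m <;> simpa using h _ h₁₀ _ h₀₁
  obtain ⟨G⟩ := Gadget.nonempty_of_pppLE hOR ⟨_, h₁₀.1⟩ fun m => hcol m h₁₀.1 h₀₁.1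
  obtain ⟨G'⟩ := Gadget.nonempty_of_pppLE hNAND ⟨_, h₁₀.2⟩ fun m => hcol m h₁₀.2 h₀₁.2
  exact fun k _ => Chain.simulatesEqK_of_gadgets k G G'
end
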